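/- arXiv:1105.2031 — 2 statements merged into one kernel-verified Lean document; each statement's English description precedes it below -/
import Mathlib

section
/- Let β be the arcsine law on [−2,2] and define the operator (𝒰f)(x) = ∫ (f(x) − f(y))/(x − y) β(dy) for C¹ functions f on [−2,2]. Then for every n ≥ 1 and x ∈ [−2,2], (𝒰φ_n)(x) = (1/2)·ψ_{n−1}(x), where φ_n(x) = T_n(x/2) and ψ_n(x) = U_n(x/2). -/
open MeasureTheory Real Polynomial Polynomial.Chebyshev

/-- The arcsine law on `[-2,2]`. -/
noncomputable def arcsineLaw : Measure ℝ :=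
  (volume.restrict (Set.Icc (-2 : ℝ) 2)).withDensity
    fun y => ENNReal.ofReal (1 / (π * Real.sqrt (4 - y ^ 2)))

/-!
Writing `D_n(a, b) = U_{n-1}(a) + 2 ∑_{1 ≤ k < n} U_{n-1-k}(a) T_k(b)`, the three-term recurrences
of `T` and `U` give `T_n(a) - T_n(b) = (a - b) D_n(a, b)`. As `β` has no atoms, the difference
quotient equals `D_n(x/2, y/2) / 2` for `β`-a.e. `y`. The substitution `y = 2 cos θ` turns `β` into
`dθ / π` on `(0, π)`, where `T_k(cos θ) = cos kθ` integrates to `0` for `k ≥ 1`, so only the term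
`U_{n-1}(x/2)` survives.
-/

open Finset

namespace Polynomial.Chebyshev

variable (R : Type*) [CommRing R]

noncomputable def dividedDiffT (n : ℕ) (a b : R) : R :=
  (U R (n - 1 : ℤ)).eval a + 2 * ∑ k ∈ Ico 1 n, (U R (n - 1 - k : ℤ)).eval a * (T R k).eval b

variable {R}

theorem dividedDiffT_add_two (n : ℕ) (a b : R) :
    dividedDiffT R (n + 2) a b =
      2 * a * dividedDiffT R (n + 1) a b - dividedDiffT R n a b + 2 * (T R (n + 1 : ℤ)).eval b := by
  have hU (m : ℤ) : (U R (m + 2)).eval a = 2 * a * (U R (m + 1)).eval a - (U R m).eval a := by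
    simp [U_add_two]
  -- the `k = n` term carries the factor `U_{-1} = 0`
  have hlow : ∑ k ∈ Ico 1 (n + 1), (U R (n - 1 - k : ℤ)).eval a * (T R k).eval b =
      ∑ k ∈ Ico 1 n, (U R (n - 1 - k : ℤ)).eval a * (T R k).eval b := by
    rcases Nat.eq_zero_or_pos n with rfl | hn
    · simp
    · simp [sum_Ico_succ_top hn]
  have hsum : ∑ k ∈ Ico 1 (n + 2), (U R ((n + 2 : ℕ) - 1 - k : ℤ)).eval a * (T R k).eval b =
      2 * a * ∑ k ∈ Ico 1 (n + 1), (U R ((n + 1 : ℕ) - 1 - k : ℤ)).eval a * (T R k).eval b -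
        ∑ k ∈ Ico 1 n, (U R (n - 1 - k : ℤ)).eval a * (T R k).eval b + (T R (n + 1 : ℤ)).eval b := by
    rw [sum_Ico_succ_top (by omega), ← hlow, mul_sum, ← sum_sub_distrib]
    congr 1
    · refine sum_congr rfl fun k _ => ?_
      rw [show ((n + 2 : ℕ) - 1 - k : ℤ) = (n - 1 - k) + 2 by push_cast; ring, hU,
        show ((n + 1 : ℕ) - 1 - k : ℤ) = (n - 1 - k) + 1 by push_cast; ring]
      ring
    · simp [show (n : ℤ) + 2 - 1 - (n + 1) = 0 by ring]
  rw [dividedDiffT, hsum, dividedDiffT, dividedDiffT,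
    show ((n + 2 : ℕ) - 1 : ℤ) = (n - 1) + 2 by push_cast; ring, hU]
  push_cast
  rw [show (n : ℤ) - 1 + 1 = n + 1 - 1 by ring]
  ring

theorem sub_mul_dividedDiffT (n : ℕ) (a b : R) :
    (a - b) * dividedDiffT R n a b = (T R n).eval a - (T R n).eval b := by
  induction n using Nat.twoStepInduction with
  | zero => simp [dividedDiffT]
  | one => simp [dividedDiffT]
  | more n ih₀ ih₁ =>
    rw [dividedDiffT_add_two]
    push_cast at ih₁ ⊢
    simp only [T_add_two, eval_sub, eval_mul, eval_X, eval_ofNat]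
    linear_combination 2 * a * ih₁ - ih₀

end Polynomial.Chebyshev

theorem arcsineLaw_absolutelyContinuous : arcsineLaw ≪ volume :=
  (withDensity_absolutelyContinuous _ _).trans Measure.restrict_le_self.absolutelyContinuous

theorem ae_ne_arcsineLaw (x : ℝ) : ∀ᵐ y ∂arcsineLaw, y ≠ x :=
  arcsineLaw_absolutelyContinuous.ae_le (Measure.ae_ne volume x)

theorem integral_arcsineLaw_eq_setIntegral (h : ℝ → ℝ) :
    ∫ y, h y ∂arcsineLaw = ∫ y in Set.Ioo (-2) 2, (π * √(4 - y ^ 2))⁻¹ * h y := by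
  rw [arcsineLaw, integral_withDensity_eq_integral_toReal_smul (by fun_prop)
    (.of_forall fun _ => ENNReal.ofReal_lt_top), integral_Icc_eq_integral_Ioo]
  refine integral_congr_ae (.of_forall fun y => ?_)
  simp only [one_div, smul_eq_mul]
  rw [ENNReal.toReal_ofReal (by positivity)]

theorem integral_arcsineLaw (h : ℝ → ℝ) :
    ∫ y, h y ∂arcsineLaw = π⁻¹ * ∫ θ in 0..π, h (2 * cos θ) := by
  have himage : (fun θ => 2 * cos θ) '' Set.Ioo 0 π = Set.Ioo (-2) 2 := by
    have hcos : cos '' Set.Ioo 0 π = Set.Ioo (-1) 1 := cosPartialHomeomorph.image_source_eq_target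
    rw [← Set.image_image (2 * ·) cos, hcos, Set.image_mul_left_Ioo two_pos]
    norm_num
  have hinj : Set.InjOn (fun θ => 2 * cos θ) (Set.Ioo 0 π) := fun θ₁ h₁ θ₂ h₂ h =>
    injOn_cos (Set.Ioo_subset_Icc_self h₁) (Set.Ioo_subset_Icc_self h₂) (by simpa using h)
  have hderiv (θ : ℝ) : HasDerivWithinAt (fun θ => 2 * cos θ) (2 * -sin θ) (Set.Ioo 0 π) θ :=
    ((hasDerivAt_cos θ).const_mul 2).hasDerivWithinAt
  rw [integral_arcsineLaw_eq_setIntegral, ← himage,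
    integral_image_eq_integral_abs_deriv_smul measurableSet_Ioo (fun θ _ => hderiv θ) hinj,
    intervalIntegral.integral_of_le pi_pos.le, integral_Ioc_eq_integral_Ioo, ← integral_const_mul]
  refine setIntegral_congr_fun measurableSet_Ioo fun θ hθ => ?_
  have hsin : 0 < sin θ := sin_pos_of_pos_of_lt_pi hθ.1 hθ.2
  have hsqrt : √(4 - (2 * cos θ) ^ 2) = 2 * sin θ := by
    rw [← sqrt_sq (by positivity : 0 ≤ 2 * sin θ)]
    congr 1
    nlinarith [sin_sq_add_cos_sq θ]
  rw [smul_eq_mul, hsqrt, abs_of_neg (by linarith)]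
  field_simp

theorem integral_cos_nat_mul (k : ℕ) (hk : k ≠ 0) : ∫ θ in 0..π, cos (k * θ) = 0 := by
  simp [intervalIntegral.integral_comp_mul_left (fun θ => cos θ) (Nat.cast_ne_zero.mpr hk),
    integral_cos, sin_nat_mul_pi]

theorem integral_dividedDiffT_cos (n : ℕ) (a : ℝ) :
    ∫ θ in 0..π, dividedDiffT ℝ n a (cos θ) = π * (U ℝ (n - 1 : ℤ)).eval a := by
  have hT (k : ℕ) (θ : ℝ) : (T ℝ k).eval (cos θ) = cos (k * θ) := by
    exact_mod_cast T_real_cos θ k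
  have hcos : ∀ k ∈ Ico 1 n,
      ∫ θ in 0..π, (U ℝ (n - 1 - k : ℤ)).eval a * (T ℝ k).eval (cos θ) = 0 := fun k hk => by
    simp only [hT, intervalIntegral.integral_const_mul,
      integral_cos_nat_mul k (by simp at hk; omega), mul_zero]
  simp only [dividedDiffT]
  rw [intervalIntegral.integral_add intervalIntegrable_const
      (Continuous.intervalIntegrable (by fun_prop) _ _),
    intervalIntegral.integral_const_mul, intervalIntegral.integral_finsetSum
      fun _ _ => Continuous.intervalIntegrable (by fun_prop) _ _, sum_eq_zero hcos]
  simp [mul_comm]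

theorem calU_chebyshev_T_general (n : ℕ) (x : ℝ) :
    ∫ y, ((T ℝ n).eval (x / 2) - (T ℝ n).eval (y / 2)) / (x - y) ∂arcsineLaw =
      (1 / 2) * (U ℝ ((n : ℤ) - 1)).eval (x / 2) := by
  have hquot : (fun y => ((T ℝ n).eval (x / 2) - (T ℝ n).eval (y / 2)) / (x - y))
      =ᵐ[arcsineLaw] fun y => dividedDiffT ℝ n (x / 2) (y / 2) / 2 := by
    filter_upwards [ae_ne_arcsineLaw x] with y hy
    rw [← sub_mul_dividedDiffT, div_eq_div_iff (sub_ne_zero.mpr hy.symm) two_ne_zero]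
    ring
  rw [integral_congr_ae hquot, integral_arcsineLaw]
  simp only [mul_div_cancel_left₀ _ (two_ne_zero' ℝ), intervalIntegral.integral_div,
    integral_dividedDiffT_cos]
  field_simp

/-- The operator `𝒰` applied to `φ_n(x) = T_n(x/2)` yields `(1/2) ψ_{n-1}(x)`:
`∫ (φ_n(x) - φ_n(y))/(x - y) β(dy) = U_{n-1}(x/2)/2` for `n ≥ 1`, `x ∈ [-2,2]`.
(The integrand at `y = x` is irrelevant since the arcsine law is atomless.) -/
theorem calU_chebyshev_T (n : ℕ) (hn : 1 ≤ n) (x : ℝ) (hx : x ∈ Set.Icc (-2 : ℝ) 2) :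
    ∫ y, ((T ℝ n).eval (x / 2) - (T ℝ n).eval (y / 2)) / (x - y) ∂arcsineLaw =
      (1 / 2) * (U ℝ ((n : ℤ) - 1)).eval (x / 2) :=
  calU_chebyshev_T_general n x
end

section
/- For every integer n ≥ 1 and all x ∈ [−2,2]: n·φ_n(x) = ∫ y·φ_n'(y) β(dy) + x·∫ φ_n'(y) β(dy) − (4 − x²)·∫ (φ_n'(x) − φ_n'(y))/(x − y) β(dy), where φ_n(x) = T_n(x/2) and β is the arcsine law on [−2,2]. In other words, the integro-differential operator (𝒩φ)(x) = ∫ yφ'(y)β(dy) + x∫ φ'(y)β(dy) − (4−x²)∫ (φ'(x)−φ'(y))/(x−y) β(dy) satisfies 𝒩φ_n = n·φ_n. -/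
/-!
Under `y = 2x` the arcsine law is Mathlib's Chebyshev measure `measureT` divided by `π`, so
it is natural to work with the rescaled Chebyshev polynomials `C_n(y) = 2 T_n(y/2)` and
`S_n(y) = U_n(y/2)` (Mathlib's `Chebyshev.C` and `Chebyshev.S`). Then `φ_n = C_n / 2`,
`φ_n' = (n/2) S_{n-1}`, and orthogonality of the `T_n` gives `∫ C_n dβ = 2 δ_{n0}`, hence
`∫ S_{n-1} dβ = [n odd]` and `∫ y S_{n-1}(y) β(dy) = 2 [n even]` for `n ≥ 1`.
The three-term recurrence `S_{k+2} = X S_{k+1} - S_k` becomes a recurrence for the integrated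
difference quotients, and induction gives
`(4 - x²) ∫ (S_{n-1}(x) - S_{n-1}(y)) / (x - y) β(dy) = (if n even then 2 else x) - C_n(x)`.
Adding up the three terms of `𝒩 φ_n` leaves `n φ_n`.
-/

open MeasureTheory Real Polynomial Polynomial.Chebyshev

open Set

theorem arcsineLaw_eq_smul_map_measureT :
    arcsineLaw = ENNReal.ofReal π⁻¹ • measureT.map (2 * ·) := by
  ext s hs
  have h2 := measurableEmbedding_mulLeft₀ (two_ne_zero : (2 : ℝ) ≠ 0)
  have hvol : (volume : Measure ℝ) = ENNReal.ofReal 2 • volume.map (2 * ·) := by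
    rw [Real.map_volume_mul_left two_ne_zero, smul_smul, ← ENNReal.ofReal_mul zero_le_two]
    norm_num
  rw [Measure.smul_apply, h2.map_apply, measureT, Measure.restrict_apply (hs.preimage h2.measurable),
    withDensity_apply _ ((hs.preimage h2.measurable).inter measurableSet_Ioc), arcsineLaw,
    withDensity_apply _ hs, Measure.restrict_restrict hs]
  nth_rw 1 [hvol]
  rw [Measure.restrict_smul, lintegral_smul_measure, h2.restrict_map, h2.lintegral_map, smul_eq_mul,
    smul_eq_mul, ← lintegral_const_mul' _ _ ENNReal.ofReal_ne_top,
    ← lintegral_const_mul' _ _ ENNReal.ofReal_ne_top, preimage_inter,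
    preimage_const_mul_Icc₀ _ _ two_pos, neg_div, div_self two_ne_zero,
    Measure.restrict_congr_set ((ae_eq_refl _).inter Ioc_ae_eq_Icc.symm)]
  refine lintegral_congr fun x => ?_
  rw [← ENNReal.ofReal_mul zero_le_two, ← ENNReal.ofReal_eq_coe_nnreal,
    ← ENNReal.ofReal_mul (by positivity)]
  congr 1
  rw [show 4 - (2 * x) ^ 2 = 2 ^ 2 * (1 - x ^ 2) by ring, Real.sqrt_mul (by positivity),
    Real.sqrt_sq zero_le_two, Real.sqrt_inv]
  field_simp

theorem integral_arcsineLaw_s13 (f : ℝ → ℝ) :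
    ∫ y, f y ∂arcsineLaw = π⁻¹ * ∫ x, f (2 * x) ∂measureT := by
  rw [arcsineLaw_eq_smul_map_measureT, integral_smul_measure,
    (measurableEmbedding_mulLeft₀ two_ne_zero).integral_map,
    ENNReal.toReal_ofReal (by positivity), smul_eq_mul]

theorem integrable_arcsineLaw {f : ℝ → ℝ} (hf : ContinuousOn f (Icc (-2) 2)) :
    Integrable f arcsineLaw := by
  rw [arcsineLaw_eq_smul_map_measureT]
  refine Integrable.smul_measure ?_ ENNReal.ofReal_ne_top
  refine (measurableEmbedding_mulLeft₀ two_ne_zero).integrable_map_iff.2 (integrable_measureT ?_)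
  refine hf.comp (continuous_const_mul 2).continuousOn fun x hx => ?_
  constructor <;> linarith [hx.1, hx.2]

theorem integrable_eval_arcsineLaw (p : ℝ[X]) : Integrable p.eval arcsineLaw :=
  integrable_arcsineLaw p.continuousOn

instance : NullSingletonClass arcsineLaw :=
  ⟨fun x => withDensity_absolutelyContinuous _ _ (measure_singleton x)⟩

theorem integrable_slope_arcsineLaw {f : ℝ → ℝ} {x : ℝ} (hf : Continuous f)
    (hfx : DifferentiableAt ℝ f x) : Integrable (slope f x) arcsineLaw := by
  have hd : Continuous (dslope f x) :=
    continuousOn_univ.1 ((continuousOn_dslope Filter.univ_mem).2 ⟨hf.continuousOn, hfx⟩)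
  refine (integrable_arcsineLaw hd.continuousOn).congr ?_
  filter_upwards [Measure.ae_ne arcsineLaw x] with y hy using dslope_of_ne f hy

theorem C_eval_two_mul (n : ℤ) (x : ℝ) : (Chebyshev.C ℝ n).eval (2 * x) = 2 * (T ℝ n).eval x := by
  simpa using congr_arg (eval x) (C_comp_two_mul_X ℝ n)

theorem S_eval_two_mul (n : ℤ) (x : ℝ) : (S ℝ n).eval (2 * x) = (U ℝ n).eval x := by
  simpa using congr_arg (eval x) (S_comp_two_mul_X ℝ n)

theorem T_eval_half (n : ℤ) (x : ℝ) : (T ℝ n).eval (x / 2) = (Chebyshev.C ℝ n).eval x / 2 := by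
  rw [← mul_div_cancel₀ x two_ne_zero, C_eval_two_mul]
  ring_nf

theorem deriv_T_eval_half (n : ℤ) :
    deriv (fun t => (T ℝ n).eval (t / 2)) = fun y => n / 2 * (S ℝ (n - 1)).eval y := by
  funext y
  have h := ((T ℝ n).hasDerivAt (y / 2)).comp y ((hasDerivAt_id' y).div_const 2)
  refine h.deriv.trans ?_
  rw [T_derivative_eq_U, eval_mul, eval_intCast, ← S_eval_two_mul, mul_div_cancel₀ y two_ne_zero]
  ring

theorem S_add_two_eq_C_add_S (R : Type*) [CommRing R] (n : ℤ) :
    S R (n + 2) = Chebyshev.C R (n + 2) + S R n := by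
  linear_combination (norm := ring_nf) -C_eq_S_sub_X_mul_S R (n + 2) - S_add_two R n

theorem integral_eval_C_arcsineLaw (n : ℤ) :
    ∫ y, (Chebyshev.C ℝ n).eval y ∂arcsineLaw = if n = 0 then 2 else 0 := by
  simp_rw [integral_arcsineLaw_s13, C_eval_two_mul, integral_const_mul]
  split_ifs with hn
  · subst hn
    rw [integral_eval_T_real_measureT_zero]
    field_simp
  · rw [integral_eval_T_real_measureT_of_ne_zero hn]
    simp

theorem integral_eval_S_sub_one_arcsineLaw (n : ℕ) :
    ∫ y, (S ℝ (n - 1)).eval y ∂arcsineLaw = if Even n then 0 else 1 := by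
  induction n using Nat.twoStepInduction with
  | zero => simp
  | one => simpa using integral_eval_C_arcsineLaw 0
  | more n ih _ =>
    have hidx : ((n + 2 : ℕ) : ℤ) - 1 = (n - 1 : ℤ) + 2 := by push_cast; ring
    simp only [hidx, S_add_two_eq_C_add_S, eval_add]
    rw [integral_add (integrable_eval_arcsineLaw _) (integrable_eval_arcsineLaw _), ih,
      integral_eval_C_arcsineLaw, if_neg (by omega), zero_add]
    simp [Nat.even_add]

theorem integral_mul_eval_S_sub_one_arcsineLaw {n : ℕ} (hn : n ≠ 0) :
    ∫ y, y * (S ℝ (n - 1)).eval y ∂arcsineLaw = if Even n then 2 else 0 := by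
  have h (y : ℝ) : y * (S ℝ (n - 1)).eval y = 2 * (S ℝ n).eval y - (Chebyshev.C ℝ n).eval y := by
    simp [C_eq_S_sub_X_mul_S ℝ n]
  have hS := integral_eval_S_sub_one_arcsineLaw (n + 1)
  rw [Nat.cast_succ, add_sub_cancel_right] at hS
  simp_rw [h]
  rw [integral_sub ((integrable_eval_arcsineLaw _).const_mul 2) (integrable_eval_arcsineLaw _),
    integral_const_mul, integral_eval_C_arcsineLaw, hS]
  by_cases he : Even n <;> simp [he, hn, Nat.even_add_one]

theorem slope_eval_X_mul_sub {𝕜 : Type*} [Field 𝕜] (p q : 𝕜[X]) {x y : 𝕜} (h : y ≠ x) :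
    slope (X * p - q).eval x y = x * slope p.eval x y + p.eval y - slope q.eval x y := by
  have : y - x ≠ 0 := sub_ne_zero.2 h
  simp only [slope_def_field, eval_sub, eval_mul, eval_X]
  field_simp
  ring

theorem integral_slope_eval_S_add_two (x : ℝ) (k : ℤ) :
    ∫ y, slope (S ℝ (k + 2)).eval x y ∂arcsineLaw =
      x * (∫ y, slope (S ℝ (k + 1)).eval x y ∂arcsineLaw) + (∫ y, (S ℝ (k + 1)).eval y ∂arcsineLaw)
        - ∫ y, slope (S ℝ k).eval x y ∂arcsineLaw := by
  have hslope (p : ℝ[X]) : Integrable (slope p.eval x) arcsineLaw :=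
    integrable_slope_arcsineLaw p.continuous p.differentiableAt
  have hrec : slope (S ℝ (k + 2)).eval x =ᵐ[arcsineLaw] fun y =>
      x * slope (S ℝ (k + 1)).eval x y + (S ℝ (k + 1)).eval y - slope (S ℝ k).eval x y := by
    filter_upwards [Measure.ae_ne arcsineLaw x] with y hy
    rw [S_add_two]
    exact slope_eval_X_mul_sub _ _ hy
  have hadd : Integrable (fun y => x * slope (S ℝ (k + 1)).eval x y + (S ℝ (k + 1)).eval y)
      arcsineLaw := ((hslope _).const_mul x).add (integrable_eval_arcsineLaw _)
  rw [integral_congr_ae hrec, integral_sub hadd (hslope _),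
    integral_add ((hslope _).const_mul x) (integrable_eval_arcsineLaw _), integral_const_mul]

theorem four_sub_sq_mul_integral_slope_eval_S_sub_one (x : ℝ) (n : ℕ) :
    (4 - x ^ 2) * ∫ y, slope (S ℝ (n - 1)).eval x y ∂arcsineLaw =
      (if Even n then 2 else x) - (Chebyshev.C ℝ n).eval x := by
  induction n using Nat.twoStepInduction with
  | zero => simp [slope_def_field]
  | one => simp [slope_def_field]
  | more n ih₀ ih₁ =>
    have hidx : ((n + 2 : ℕ) : ℤ) - 1 = (n - 1 : ℤ) + 2 := by push_cast; ring
    have hidx₁ : ((n + 1 : ℕ) : ℤ) - 1 = (n - 1 : ℤ) + 1 := by push_cast; ring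
    have hS := integral_eval_S_sub_one_arcsineLaw (n + 1)
    rw [hidx₁] at ih₁ hS
    have hC := congr_arg (eval x) (C_add_two ℝ n)
    simp only [eval_sub, eval_mul, eval_X] at hC
    push_cast at hC ih₁
    rw [hidx, integral_slope_eval_S_add_two]
    push_cast
    rw [hC]
    by_cases he : Even n <;>
      simp only [he, Nat.even_add_one, sub_add_cancel, not_true_eq_false, not_false_eq_true,
        if_true, if_false] at ih₀ ih₁ hS ⊢ <;>
      linear_combination x * ih₁ - ih₀ + (4 - x ^ 2) * hS

theorem counting_operator_chebyshev_general (n : ℕ) (hn : 1 ≤ n) (x : ℝ) :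
    (n : ℝ) * (T ℝ n).eval (x / 2) =
      (∫ y, y * deriv (fun t => (T ℝ n).eval (t / 2)) y ∂arcsineLaw) +
        x * (∫ y, deriv (fun t => (T ℝ n).eval (t / 2)) y ∂arcsineLaw) -
        (4 - x ^ 2) *
          ∫ y, (deriv (fun t => (T ℝ n).eval (t / 2)) x -
              deriv (fun t => (T ℝ n).eval (t / 2)) y) / (x - y) ∂arcsineLaw := by
  have hslope (y : ℝ) : (n / 2 * (S ℝ (n - 1)).eval x - n / 2 * (S ℝ (n - 1)).eval y) / (x - y)
      = n / 2 * slope (S ℝ (n - 1)).eval x y := by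
    rw [slope_comm, slope_def_field, ← mul_sub, mul_div_assoc]
  simp only [deriv_T_eval_half, Int.cast_natCast, hslope, mul_left_comm _ ((n : ℝ) / 2),
    integral_const_mul]
  rw [integral_mul_eval_S_sub_one_arcsineLaw (by omega), integral_eval_S_sub_one_arcsineLaw,
    four_sub_sq_mul_integral_slope_eval_S_sub_one, T_eval_half]
  split_ifs <;> ring

/-- The counting-number operator identity `𝒩 φ_n = n φ_n` for the rescaled
Chebyshev polynomials `φ_n(x) = T_n(x/2)`:
`n φ_n(x) = ∫ y φ_n'(y) β(dy) + x ∫ φ_n'(y) β(dy)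
  - (4 - x²) ∫ (φ_n'(x) - φ_n'(y))/(x - y) β(dy)` for all `x ∈ [-2,2]`. -/
theorem counting_operator_chebyshev (n : ℕ) (hn : 1 ≤ n) (x : ℝ)
    (hx : x ∈ Set.Icc (-2 : ℝ) 2) :
    (n : ℝ) * (T ℝ n).eval (x / 2) =
      (∫ y, y * deriv (fun t => (T ℝ n).eval (t / 2)) y ∂arcsineLaw) +
        x * (∫ y, deriv (fun t => (T ℝ n).eval (t / 2)) y ∂arcsineLaw) -
        (4 - x ^ 2) *
          ∫ y, (deriv (fun t => (T ℝ n).eval (t / 2)) x -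
              deriv (fun t => (T ℝ n).eval (t / 2)) y) / (x - y) ∂arcsineLaw :=
  counting_operator_chebyshev_general n hn x
end
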